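/- Let a, b, v, C be real constants with a > 0, b > 0, v > 0, and let I ⊆ (0, ∞) be an open interval on which D(t) := a·b^(−2v)·Γ(2v, bt)·e^(bt) + C·e^(bt) is nonzero. Then the function s(t) := 1/D(t) is differentiable on I and satisfies the first characteristic equation s′(t) = s(t)·(a·t^(2v−1)·s(t) − b) for every t ∈ I. -/

import Mathlib

open Real MeasureTheory

/-- The upper incomplete gamma function `Γ(q, p) = ∫_p^∞ x^(q−1) e^(−x) dx`. -/
noncomputable def upperGamma (q p : ℝ) : ℝ := ∫ x in Set.Ioi p, x ^ (q - 1) * Real.exp (-x)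

/-- The denominator `D(t) = a·b^(−2v)·Γ(2v, bt)·e^(bt) + C·e^(bt)`. -/
noncomputable def Dfun (a b v C t : ℝ) : ℝ :=
  a * b ^ (-(2 * v)) * upperGamma (2 * v) (b * t) * Real.exp (b * t) + C * Real.exp (b * t)

/-!
By the fundamental theorem of calculus `∂ₚ Γ(q, p) = −p^(q−1) e^(−p)` for `p > 0` (any real `q`,
since only the tail of the integral matters). Differentiating
`D(t) = e^(bt) (a b^(−2v) Γ(2v, bt) + C)` therefore gives the linear equation
`D′ = b D − a t^(2v−1)`, the powers of `b` and the exponentials cancelling. The substitution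
`s = 1/D` turns this linear equation into the Bernoulli equation `s′ = s (a t^(2v−1) s − b)`.
-/

theorem hasDerivAt_integral_Ioi {f : ℝ → ℝ} {c p : ℝ} (hcp : c < p)
    (hint : IntegrableOn f (Set.Ioi c)) (hcont : ContinuousOn f (Set.Ioi c)) :
    HasDerivAt (fun r => ∫ x in Set.Ioi r, f x) (-f p) p := by
  have hcontAt : ContinuousAt f p := hcont.continuousAt (isOpen_Ioi.mem_nhds hcp)
  have hprimitive : HasDerivAt (fun r => ∫ x in c..r, f x) (f p) p :=
    intervalIntegral.integral_hasDerivAt_right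
      ((intervalIntegrable_iff_integrableOn_Ioc_of_le hcp.le).2
        (hint.mono_set Set.Ioc_subset_Ioi_self))
      (hcont.stronglyMeasurableAtFilter isOpen_Ioi p hcp) hcontAt
  have htail : (fun r => (∫ x in Set.Ioi c, f x) - ∫ x in c..r, f x) =ᶠ[nhds p]
      fun r => ∫ x in Set.Ioi r, f x := by
    filter_upwards [isOpen_Ioi.mem_nhds hcp] with r hr
    rw [← intervalIntegral.integral_Ioi_sub_Ioi hint (le_of_lt hr), sub_sub_cancel]
  exact (hprimitive.const_sub _).congr_of_eventuallyEq htail.symm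

theorem continuousOn_rpow_mul_exp_neg (s : ℝ) :
    ContinuousOn (fun x : ℝ => x ^ s * exp (-x)) (Set.Ioi 0) := fun x hx =>
  ((continuousAt_rpow_const x s (Or.inl (ne_of_gt hx))).mul
    (continuous_exp.comp continuous_neg).continuousAt).continuousWithinAt

theorem integrableOn_Ioi_rpow_mul_exp_neg (s : ℝ) {c : ℝ} (hc : 0 < c) :
    IntegrableOn (fun x : ℝ => x ^ s * exp (-x)) (Set.Ioi c) := by
  refine integrable_of_isBigO_exp_neg one_half_pos
    ((continuousOn_rpow_mul_exp_neg s).mono fun x hx => hc.trans_le hx) ?_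
  simpa only [mul_comm] using (Gamma_integrand_isLittleO s).isBigO

theorem hasDerivAt_upperGamma (q : ℝ) {p : ℝ} (hp : 0 < p) :
    HasDerivAt (upperGamma q) (-(p ^ (q - 1) * exp (-p))) p :=
  hasDerivAt_integral_Ioi (half_lt_self hp) (integrableOn_Ioi_rpow_mul_exp_neg _ (half_pos hp))
    ((continuousOn_rpow_mul_exp_neg _).mono (Set.Ioi_subset_Ioi (half_pos hp).le))

theorem HasDerivAt.one_div_of_eq_mul_sub {D : ℝ → ℝ} {t b g : ℝ}
    (hD : HasDerivAt D (b * D t - g) t) (hDt : D t ≠ 0) :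
    HasDerivAt (fun x => 1 / D x) (1 / D t * (g * (1 / D t) - b)) t :=
  ((hasDerivAt_const t (1 : ℝ)).fun_div hD hDt).congr_deriv (by field_simp; ring)

theorem hasDerivAt_Dfun (a v C : ℝ) {b : ℝ} (hb : 0 < b) {t : ℝ} (ht : 0 < t) :
    HasDerivAt (Dfun a b v C) (b * Dfun a b v C t - a * t ^ (2 * v - 1)) t := by
  have hlin : HasDerivAt (fun x : ℝ => b * x) b t := by
    simpa using (hasDerivAt_id t).const_mul b
  have hG := (hasDerivAt_upperGamma (2 * v) (mul_pos hb ht)).comp t hlin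
  have hE : HasDerivAt (fun x : ℝ => exp (b * x)) (exp (b * t) * b) t := hlin.exp
  refine (((hG.const_mul (a * b ^ (-(2 * v)))).mul hE).add (hE.const_mul C)).congr_deriv ?_
  have hexp : exp (-(b * t)) * exp (b * t) = 1 := by rw [← exp_add, neg_add_cancel, exp_zero]
  have hpow : b ^ (-(2 * v)) * b ^ (2 * v - 1) * b = 1 := by
    rw [← rpow_add hb, ← rpow_add_one hb.ne', show -(2 * v) + (2 * v - 1) + 1 = 0 by ring,
      rpow_zero]
  rw [Dfun, Function.comp_apply, mul_rpow hb.le ht.le]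
  linear_combination -(a * b ^ (-(2 * v)) * b ^ (2 * v - 1) * t ^ (2 * v - 1) * b) * hexp
    - (a * t ^ (2 * v - 1)) * hpow

theorem stmt3_general (a b v C α β : ℝ) (hb : 0 < b)
    (hI : Set.Ioo α β ⊆ Set.Ioi 0)
    (hD : ∀ t ∈ Set.Ioo α β, Dfun a b v C t ≠ 0) :
    DifferentiableOn ℝ (fun t : ℝ => 1 / Dfun a b v C t) (Set.Ioo α β) ∧
    ∀ t ∈ Set.Ioo α β,
      HasDerivAt (fun t : ℝ => 1 / Dfun a b v C t)
        ((1 / Dfun a b v C t) * (a * t ^ (2 * v - 1) * (1 / Dfun a b v C t) - b)) t := by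
  have hderiv : ∀ t ∈ Set.Ioo α β, HasDerivAt (fun t : ℝ => 1 / Dfun a b v C t)
      ((1 / Dfun a b v C t) * (a * t ^ (2 * v - 1) * (1 / Dfun a b v C t) - b)) t :=
    fun t ht => (hasDerivAt_Dfun a v C hb (hI ht)).one_div_of_eq_mul_sub (hD t ht)
  exact ⟨fun t ht => (hderiv t ht).differentiableAt.differentiableWithinAt, hderiv⟩

/-- On an open interval `I = (α, β) ⊆ (0, ∞)` where `D` is nonzero, `s(t) := 1/D(t)` is
differentiable and satisfies the first characteristic equation
`s′(t) = s(t)·(a·t^(2v−1)·s(t) − b)`. -/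
theorem stmt3 (a b v C α β : ℝ) (ha : 0 < a) (hb : 0 < b) (hv : 0 < v)
    (hI : Set.Ioo α β ⊆ Set.Ioi 0)
    (hD : ∀ t ∈ Set.Ioo α β, Dfun a b v C t ≠ 0) :
    DifferentiableOn ℝ (fun t : ℝ => 1 / Dfun a b v C t) (Set.Ioo α β) ∧
    ∀ t ∈ Set.Ioo α β,
      HasDerivAt (fun t : ℝ => 1 / Dfun a b v C t)
        ((1 / Dfun a b v C t) * (a * t ^ (2 * v - 1) * (1 / Dfun a b v C t) - b)) t :=
  stmt3_general a b v C α β hb hI hD
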